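/- Let G_1 and G_2 be Markov equivalent DAGs on V. If P is V-OUS and collider-stable with respect to G_1, then P is V-OUS and collider-stable with respect to G_2. -/
import Mathlib


open MeasureTheory ProbabilityTheory

/-- A directed acyclic graph on vertex set `V`: a directed edge relation with no
directed cycles (a directed path from a node to itself). -/
structure DAG (V : Type*) where
  Edge : V → V → Prop
  acyclic : ∀ i, ¬ Relation.TransGen Edge i i

namespace DAG

variable {V : Type*}

/-- `i` and `j` are adjacent if there is a directed edge between them in either direction. -/
def Adj (G : DAG V) (i j : V) : Prop := G.Edge i j ∨ G.Edge j i

/-- `an_G(C)`: the set of nodes not in `C` with a directed path to some node of `C`. -/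
def ancestors (G : DAG V) (C : Set V) : Set V :=
  {i | i ∉ C ∧ ∃ j ∈ C, Relation.TransGen G.Edge i j}

/-- A path between `a` and `b` in (the skeleton of) a DAG `G`: a sequence of at least two
distinct vertices starting at `a`, ending at `b`, with consecutive vertices adjacent. -/
structure Path (G : DAG V) (a b : V) where
  n : ℕ
  npos : 0 < n
  f : Fin (n + 1) → V
  first : f 0 = a
  last : f (Fin.last n) = b
  adj : ∀ i : Fin n, G.Adj (f i.castSucc) (f i.succ)
  inj : Function.Injective f

/-- The intermediate node at position `t` of the path is a collider on the path:
both incident edges of the path point into it. -/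
def Path.ColliderAt {G : DAG V} {a b : V} (π : Path G a b) (t : ℕ)
    (h1 : 0 < t) (h2 : t < π.n) : Prop :=
  G.Edge (π.f ⟨t - 1, by omega⟩) (π.f ⟨t, by omega⟩) ∧
  G.Edge (π.f ⟨t + 1, by omega⟩) (π.f ⟨t, by omega⟩)

/-- A path is blocked by `C` if some intermediate non-collider on the path lies in `C`,
or some collider `m` on the path satisfies `m ∉ C ∪ an_G(C)`. -/
def Path.Blocked {G : DAG V} {a b : V} (π : Path G a b) (C : Set V) : Prop :=
  ∃ (t : ℕ) (h1 : 0 < t) (h2 : t < π.n),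
    (¬ π.ColliderAt t h1 h2 ∧ π.f ⟨t, by omega⟩ ∈ C) ∨
    (π.ColliderAt t h1 h2 ∧ π.f ⟨t, by omega⟩ ∉ C ∪ G.ancestors C)

/-- d-separation: every path between a node of `A` and a node of `B` is blocked by `C`. -/
def dSep (G : DAG V) (A B C : Set V) : Prop :=
  ∀ a ∈ A, ∀ b ∈ B, ∀ π : Path G a b, π.Blocked C

/-- Two DAGs are Markov equivalent if they have exactly the same d-separations. -/
def MarkovEquiv (G₁ G₂ : DAG V) : Prop :=
  ∀ A B C : Set V, Disjoint A B → Disjoint A C → Disjoint B C →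
    (G₁.dSep A B C ↔ G₂.dSep A B C)

/-- A v-configuration `i ∼ k ∼ j` in the DAG: `i, k, j` distinct, `i` and `j` each
adjacent to `k`, but `i` and `j` not adjacent. -/
def VConfig (G : DAG V) (i k j : V) : Prop :=
  i ≠ j ∧ i ≠ k ∧ j ≠ k ∧ G.Adj i k ∧ G.Adj j k ∧ ¬ G.Adj i j

/-- A collider v-configuration `i → k ← j`. -/
def IsCollider (G : DAG V) (i k j : V) : Prop :=
  G.VConfig i k j ∧ G.Edge i k ∧ G.Edge j k

/-- A non-collider v-configuration. -/
def IsNonCollider (G : DAG V) (i k j : V) : Prop :=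
  G.VConfig i k j ∧ ¬ (G.Edge i k ∧ G.Edge j k)

end DAG

/-- A v-configuration `i ∼ k ∼ j` in an undirected graph given by an adjacency relation. -/
def VConfigRel {V : Type*} (A : V → V → Prop) (i k j : V) : Prop :=
  i ≠ j ∧ i ≠ k ∧ j ≠ k ∧ A i k ∧ A j k ∧ ¬ A i j

section Prob

variable {V : Type*} {Ω : Type*} [MeasurableSpace Ω] [StandardBorelSpace Ω] [Nonempty Ω]
  {E : V → Type*} [∀ i, MeasurableSpace (E i)]

/-- `A ⫫ B | C`: the families `(X i)_{i ∈ A}` and `(X j)_{j ∈ B}` are conditionally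
independent given the σ-algebra generated by `(X k)_{k ∈ C}`, under `μ`. -/
def CI (μ : Measure Ω) [IsFiniteMeasure μ] (X : ∀ i, Ω → E i)
    (hX : ∀ i, Measurable (X i)) (A B C : Set V) : Prop :=
  CondIndepFun (MeasurableSpace.comap (fun ω => fun k : C => X k.1 ω) inferInstance)
    ((measurable_pi_iff.mpr fun k : C => hX k.1).comap_le)
    (fun ω => fun i : A => X i.1 ω) (fun ω => fun j : B => X j.1 ω) μ

variable (μ : Measure Ω) [IsFiniteMeasure μ] (X : ∀ i, Ω → E i) (hX : ∀ i, Measurable (X i))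

/-- The skeleton of `P`: distinct `i, j` are adjacent iff no `C ⊆ V \ {i,j}` renders
`{i} ⫫ {j} | C`. -/
def SkP (i j : V) : Prop :=
  i ≠ j ∧ ¬ ∃ C : Set V, C ⊆ ({i, j} : Set V)ᶜ ∧ CI μ X hX {i} {j} C

/-- `P` is Markovian to `G`: every d-separation implies the corresponding
conditional independence. -/
def MarkovTo (G : DAG V) : Prop :=
  ∀ A B C : Set V, Disjoint A B → Disjoint A C → Disjoint B C →
    G.dSep A B C → CI μ X hX A B C

/-- Adjacency faithfulness: adjacent nodes of `G` are separated by no conditioning set. -/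
def AdjFaithful (G : DAG V) : Prop :=
  ∀ i j : V, G.Adj i j → ¬ ∃ C : Set V, C ⊆ ({i, j} : Set V)ᶜ ∧ CI μ X hX {i} {j} C

/-- `sk(P) = sk(G)`. -/
def SkelEq (G : DAG V) : Prop :=
  ∀ i j : V, G.Adj i j ↔ SkP μ X hX i j

/-- V-ordered upward stability wrt `G`. -/
def VOUS (G : DAG V) : Prop :=
  ∀ i k j : V, G.IsNonCollider i k j → ∀ C : Set V, C ⊆ ({i, j, k} : Set V)ᶜ →
    CI μ X hX {i} {j} C → CI μ X hX {i} {j} (C ∪ {k})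

/-- Collider-stability wrt `G`. -/
def ColliderStable (G : DAG V) : Prop :=
  ∀ i k j : V, G.IsCollider i k j →
    ∃ C : Set V, C ⊆ ({i, j, k} : Set V)ᶜ ∧ CI μ X hX {i} {j} C

/-- V-stability of `P`. -/
def VStable : Prop :=
  ∀ i k j : V, VConfigRel (SkP μ X hX) i k j → ∀ C : Set V, C ⊆ ({i, j, k} : Set V)ᶜ →
    ¬ (CI μ X hX {i} {j} C ∧ CI μ X hX {i} {j} (C ∪ {k}))

/-- The orientation rule assigns the v-configuration `i ∼ k ∼ j` of `sk(P)` to be a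
collider. -/
def AssignedCollider (i k j : V) : Prop :=
  VConfigRel (SkP μ X hX) i k j ∧
  ∃ C : Set V, C ⊆ ({i, j, k} : Set V)ᶜ ∧
    CI μ X hX {i} {j} C ∧ ¬ CI μ X hX {i} {j} (C ∪ {k})

/-- The orientation rule assigns the v-configuration `i ∼ k ∼ j` of `sk(P)` to be a
non-collider. -/
def AssignedNonCollider (i k j : V) : Prop :=
  VConfigRel (SkP μ X hX) i k j ∧
  ∀ C : Set V, C ⊆ ({i, j} : Set V)ᶜ → CI μ X hX {i} {j} C → k ∈ C

/-- A DAG `G` satisfies the V-OUS and collider-stable orientation rule wrt `P`. -/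
def SatisfiesRule (G : DAG V) : Prop :=
  SkelEq μ X hX G ∧
  (∀ i k j : V, AssignedCollider μ X hX i k j → G.IsCollider i k j) ∧
  (∀ i k j : V, AssignedNonCollider μ X hX i k j → G.IsNonCollider i k j)

/-- Modified V-stability: any two DAGs `G` with `sk(G) = sk(P)` to which `P` is V-OUS and
collider-stable are Markov equivalent. -/
def ModifiedVStable : Prop :=
  ∀ G₁ G₂ : DAG V,
    SkelEq μ X hX G₁ → VOUS μ X hX G₁ → ColliderStable μ X hX G₁ →
    SkelEq μ X hX G₂ → VOUS μ X hX G₂ → ColliderStable μ X hX G₂ →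
    DAG.MarkovEquiv G₁ G₂

/-- Ordered upward stability wrt `G`. -/
def OUS (G : DAG V) : Prop :=
  ∀ i j k : V, i ≠ j → i ≠ k → j ≠ k → k ∈ G.ancestors {i, j} →
    ∀ C : Set V, C ⊆ ({i, j, k} : Set V)ᶜ →
      CI μ X hX {i} {j} C → CI μ X hX {i} {j} (C ∪ {k})

/-- Ordered downward stability wrt `G`. -/
def ODS (G : DAG V) : Prop :=
  ∀ i j k : V, i ≠ j → i ≠ k → j ≠ k →
    ∀ C : Set V, C ⊆ ({i, j, k} : Set V)ᶜ → k ∉ G.ancestors ({i, j} ∪ C) →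
      CI μ X hX {i} {j} (C ∪ {k}) → CI μ X hX {i} {j} C

end Prob

namespace DAG

section Aux

variable {V : Type*}

lemma no_self_edge (G : DAG V) (i : V) : ¬ G.Edge i i :=
  fun h => G.acyclic i (Relation.TransGen.single h)

lemma Adj.ne {G : DAG V} {i j : V} (h : G.Adj i j) : i ≠ j := by
  rintro rfl
  rcases h with h | h <;> exact G.no_self_edge i h

lemma Adj.symm' {G : DAG V} {i j : V} (h : G.Adj i j) : G.Adj j i := h.elim Or.inr Or.inl

lemma ancestors_ancestors (G : DAG V) (S : Set V) :
    G.ancestors (G.ancestors S) ⊆ S := by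
  rintro x ⟨hx, c, ⟨hcS, m, hmS, hcm⟩, hxc⟩
  by_contra hxS
  exact hx ⟨hxS, m, hmS, hxc.trans hcm⟩

/-- A two-vertex path along an adjacency. -/
def singleEdgePath (G : DAG V) {i j : V} (h : G.Adj i j) : Path G i j where
  n := 1
  npos := one_pos
  f := ![i, j]
  first := rfl
  last := rfl
  adj := fun t => by fin_cases t; exact h
  inj := by
    have hij : i ≠ j := h.ne
    intro x y hxy
    fin_cases x <;> fin_cases y <;> simp_all

lemma adj_not_dSep (G : DAG V) {i j : V} (h : G.Adj i j) (C : Set V) :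
    ¬ G.dSep {i} {j} C := by
  intro hd
  obtain ⟨t, h1, h2, _⟩ := hd i rfl j rfl (G.singleEdgePath h)
  have h2' : t < 1 := h2
  omega

set_option maxHeartbeats 1000000 in
lemma chase_right (G : DAG V) {a b : V} (π : Path G a b) :
    ∀ d t (_ : t + d = π.n) (_ : 0 < d),
      G.Edge (π.f ⟨t, by omega⟩) (π.f ⟨t + 1, by omega⟩) →
      Relation.TransGen G.Edge (π.f ⟨t, by omega⟩) b ∨
      ∃ s, ∃ (h1 : 0 < s) (h2 : s < π.n), π.ColliderAt s h1 h2 ∧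
        Relation.TransGen G.Edge (π.f ⟨t, by omega⟩) (π.f ⟨s, by omega⟩) := by
  intro d
  induction d with
  | zero => omega
  | succ d ih =>
    intro t htd _ he
    rcases Nat.eq_zero_or_pos d with hd0 | hd0
    · -- t + 1 = π.n : reached the endpoint b
      subst hd0
      left
      have e : (⟨t + 1, by omega⟩ : Fin (π.n + 1)) = Fin.last π.n := Fin.ext (by simp; omega)
      rw [e, π.last] at he
      exact Relation.TransGen.single he
    · have ht1 : t + 1 < π.n := by omega
      by_cases hcol : π.ColliderAt (t + 1) (by omega) ht1
      · exact Or.inr ⟨t + 1, by omega, ht1, hcol, Relation.TransGen.single he⟩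
      · -- non-collider at t+1 with edge into it from the left; so edge out to the right
        have e1 : (⟨t + 1 - 1, by omega⟩ : Fin (π.n + 1)) = ⟨t, by omega⟩ :=
          Fin.mk_eq_mk.mpr (by omega)
        have hadj := π.adj ⟨t + 1, ht1⟩
        have ec : (Fin.castSucc ⟨t + 1, ht1⟩ : Fin (π.n + 1)) = ⟨t + 1, by omega⟩ :=
          Fin.ext rfl
        have es : (Fin.succ ⟨t + 1, ht1⟩ : Fin (π.n + 1)) = ⟨t + 2, by omega⟩ :=
          Fin.ext rfl
        rw [ec, es] at hadj
        have her : G.Edge (π.f ⟨t + 1, by omega⟩) (π.f ⟨t + 2, by omega⟩) := by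
          rcases hadj with h' | h'
          · exact h'
          · exfalso
            apply hcol
            refine ⟨?_, h'⟩
            rw [e1]
            exact he
        have := ih (t + 1) (by omega) hd0 her
        rcases this with h' | ⟨s, h1, h2, hcol', htr⟩
        · exact Or.inl (Relation.TransGen.head he h')
        · exact Or.inr ⟨s, h1, h2, hcol', Relation.TransGen.head he htr⟩

lemma chase_left (G : DAG V) {a b : V} (π : Path G a b) :
    ∀ t (_ : 0 < t) (_ : t ≤ π.n),
      G.Edge (π.f ⟨t, by omega⟩) (π.f ⟨t - 1, by omega⟩) →
      Relation.TransGen G.Edge (π.f ⟨t, by omega⟩) a ∨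
      ∃ s, ∃ (h1 : 0 < s) (h2 : s < π.n), π.ColliderAt s h1 h2 ∧
        Relation.TransGen G.Edge (π.f ⟨t, by omega⟩) (π.f ⟨s, by omega⟩) := by
  intro t
  induction t with
  | zero => omega
  | succ t ih =>
    intro ht0 htn he
    have e0 : (⟨t + 1 - 1, by omega⟩ : Fin (π.n + 1)) = ⟨t, by omega⟩ :=
      Fin.mk_eq_mk.mpr (by omega)
    rw [e0] at he
    rcases Nat.eq_zero_or_pos t with htz | htz
    · subst htz
      left
      have e : (⟨0, by omega⟩ : Fin (π.n + 1)) = 0 := rfl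
      rw [e, π.first] at he
      exact Relation.TransGen.single he
    · have htm : t < π.n := by omega
      by_cases hcol : π.ColliderAt t htz htm
      · exact Or.inr ⟨t, htz, htm, hcol, Relation.TransGen.single he⟩
      · have hnA : ¬ G.Edge (π.f ⟨t - 1, by omega⟩) (π.f ⟨t, by omega⟩) :=
          fun hA => hcol ⟨hA, he⟩
        have hadj := π.adj ⟨t - 1, by omega⟩
        have ec : (Fin.castSucc ⟨t - 1, by omega⟩ : Fin (π.n + 1)) = ⟨t - 1, by omega⟩ :=
          Fin.ext rfl
        have es : (Fin.succ ⟨t - 1, by omega⟩ : Fin (π.n + 1)) = ⟨t, by omega⟩ :=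
          Fin.mk_eq_mk.mpr (by omega)
        rw [ec, es] at hadj
        have hel : G.Edge (π.f ⟨t, by omega⟩) (π.f ⟨t - 1, by omega⟩) := by
          rcases hadj with h' | h'
          · exact absurd h' hnA
          · exact h'
        rcases ih htz (by omega) hel with h' | ⟨s, h1, h2, hcol', htr⟩
        · exact Or.inl (Relation.TransGen.head he h')
        · exact Or.inr ⟨s, h1, h2, hcol', Relation.TransGen.head he htr⟩

set_option maxHeartbeats 1000000 in
lemma dSep_ancestors (G : DAG V) {i j : V} (hna : ¬ G.Adj i j) :
    G.dSep {i} {j} (G.ancestors {i, j}) := by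
  intro a ha b hb π
  rw [Set.mem_singleton_iff] at ha hb
  subst ha; subst hb
  -- the endpoints and intermediate nodes
  have hnotij : ∀ (t : ℕ) (_ : 0 < t) (h2 : t < π.n), π.f ⟨t, by omega⟩ ∉ ({a, b} : Set V) := by
    intro t h1 h2 hmem
    rcases hmem with hm | hm
    · have := π.inj (hm.trans π.first.symm)
      have : t = 0 := congrArg Fin.val this
      omega
    · rw [Set.mem_singleton_iff] at hm
      have := π.inj (hm.trans π.last.symm)
      have : t = π.n := congrArg Fin.val this
      omega
  have hn1 : π.n ≠ 1 := by
    intro h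
    apply hna
    have hadj := π.adj ⟨0, π.npos⟩
    have ec : (Fin.castSucc ⟨0, π.npos⟩ : Fin (π.n + 1)) = 0 := Fin.ext rfl
    have es : (Fin.succ ⟨0, π.npos⟩ : Fin (π.n + 1)) = Fin.last π.n := Fin.ext (by simp [h])
    rw [ec, es, π.first, π.last] at hadj
    exact hadj
  have hn2 : 2 ≤ π.n := by have := π.npos; omega
  by_cases hout : ∃ t, ∃ (h1 : 0 < t) (h2 : t < π.n), π.ColliderAt t h1 h2 ∧
      π.f ⟨t, by omega⟩ ∉ G.ancestors {a, b}
  · obtain ⟨t, h1, h2, hcol, hnot⟩ := hout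
    refine ⟨t, h1, h2, Or.inr ⟨hcol, ?_⟩⟩
    intro hmem
    rcases hmem with hm | hm
    · exact hnot hm
    · exact hnotij t h1 h2 (G.ancestors_ancestors {a, b} hm)
  · push_neg at hout
    have hall : ∀ (t : ℕ) (h1 : 0 < t) (h2 : t < π.n), π.ColliderAt t h1 h2 →
        π.f ⟨t, by omega⟩ ∈ G.ancestors {a, b} := hout
    -- find a non-collider intermediate node
    obtain ⟨t, h1, h2, hnc⟩ : ∃ t, ∃ (h1 : 0 < t) (h2 : t < π.n), ¬ π.ColliderAt t h1 h2 := by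
      by_cases hc1 : π.ColliderAt 1 (by omega) (by omega)
      · rcases eq_or_lt_of_le hn2 with hn | hn
        · -- π.n = 2 and position 1 is a collider in an({a,b}) : cycle
          exfalso
          have hmem := hall 1 (by omega) (by omega) hc1
          obtain ⟨-, m, hm, htr⟩ := hmem
          obtain ⟨he0, he2⟩ := hc1
          have e0 : (⟨1 - 1, by omega⟩ : Fin (π.n + 1)) = 0 := Fin.ext rfl
          rw [e0, π.first] at he0
          have e2 : (⟨1 + 1, by omega⟩ : Fin (π.n + 1)) = Fin.last π.n := Fin.ext (by simp; omega)
          rw [e2, π.last] at he2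
          rcases hm with hm | hm
          · subst hm
            exact G.acyclic _ (htr.tail he0)
          · rw [Set.mem_singleton_iff] at hm
            subst hm
            exact G.acyclic _ (htr.tail he2)
        · by_cases hc2 : π.ColliderAt 2 (by omega) hn
          · -- adjacent colliders at 1 and 2 : 2-cycle
            exfalso
            have hb1 := hc1.2
            have hb2 := hc2.1
            have e1 : (⟨2 - 1, by omega⟩ : Fin (π.n + 1)) = ⟨1, by omega⟩ := Fin.ext rfl
            have e2 : (⟨1 + 1, by omega⟩ : Fin (π.n + 1)) = ⟨2, by omega⟩ := Fin.ext rfl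
            rw [e2] at hb1
            rw [e1] at hb2
            exact G.acyclic _ ((Relation.TransGen.single hb1).tail hb2)
          · exact ⟨2, by omega, hn, hc2⟩
      · exact ⟨1, by omega, by omega, hc1⟩
    refine ⟨t, h1, h2, Or.inl ⟨hnc, ?_⟩⟩
    -- the non-collider has an outgoing path edge; chase it
    have hadjL : G.Adj (π.f ⟨t - 1, by omega⟩) (π.f ⟨t - 1 + 1, by omega⟩) :=
      π.adj ⟨t - 1, by omega⟩
    have eL : (⟨t - 1 + 1, by omega⟩ : Fin (π.n + 1)) = ⟨t, by omega⟩ :=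
      Fin.mk_eq_mk.mpr (by omega)
    rw [eL] at hadjL
    have hadjR : G.Adj (π.f ⟨t, by omega⟩) (π.f ⟨t + 1, by omega⟩) := π.adj ⟨t, h2⟩
    have hchase : Relation.TransGen G.Edge (π.f ⟨t, by omega⟩) a ∨
        Relation.TransGen G.Edge (π.f ⟨t, by omega⟩) b ∨
        ∃ s, ∃ (hs1 : 0 < s) (hs2 : s < π.n), π.ColliderAt s hs1 hs2 ∧
          Relation.TransGen G.Edge (π.f ⟨t, by omega⟩) (π.f ⟨s, by omega⟩) := by
      rcases hadjR with hR | hR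
      · rcases G.chase_right π (π.n - t) t (by omega) (by omega) hR with h' | h'
        · exact Or.inr (Or.inl h')
        · exact Or.inr (Or.inr h')
      · -- the edge t ~ t+1 points into t; so the left edge must point out of t
        have hL : G.Edge (π.f ⟨t, by omega⟩) (π.f ⟨t - 1, by omega⟩) := by
          rcases hadjL with h' | h'
          · exact absurd ⟨h', hR⟩ hnc
          · exact h'
        rcases G.chase_left π t (by omega) (by omega) hL with h' | h'
        · exact Or.inl h'
        · exact Or.inr (Or.inr h')
    refine ⟨hnotij t h1 h2, ?_⟩
    rcases hchase with h' | h' | ⟨s, hs1, hs2, hcol, htr⟩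
    · exact ⟨a, Or.inl rfl, h'⟩
    · exact ⟨b, Or.inr rfl, h'⟩
    · obtain ⟨-, m, hm, htr'⟩ := hall s hs1 hs2 hcol
      exact ⟨m, hm, htr.trans htr'⟩

lemma markovEquiv_symm {G₁ G₂ : DAG V} (h : MarkovEquiv G₁ G₂) : MarkovEquiv G₂ G₁ :=
  fun A B C d1 d2 d3 => (h A B C d1 d2 d3).symm

lemma not_mem_ancestors_self (G : DAG V) {i : V} {S : Set V} (hi : i ∈ S) :
    i ∉ G.ancestors S := fun ⟨hni, _⟩ => hni hi

lemma adj_transfer {G₁ G₂ : DAG V} (h : MarkovEquiv G₁ G₂) {i j : V} (ha : G₁.Adj i j) :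
    G₂.Adj i j := by
  by_contra hna
  have hd := G₂.dSep_ancestors hna
  have hij : i ≠ j := ha.ne
  have hd1 : G₁.dSep {i} {j} (G₂.ancestors {i, j}) := by
    refine (h {i} {j} _ ?_ ?_ ?_).mpr hd
    · exact Set.disjoint_singleton.mpr hij
    · exact Set.disjoint_singleton_left.mpr (G₂.not_mem_ancestors_self (by simp))
    · exact Set.disjoint_singleton_left.mpr (G₂.not_mem_ancestors_self (by simp))
  exact G₁.adj_not_dSep ha _ hd1

set_option maxHeartbeats 1000000 in
lemma collider_transfer {G₁ G₂ : DAG V} (h : MarkovEquiv G₁ G₂) {i k j : V}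
    (hc : G₁.IsCollider i k j) : G₂.IsCollider i k j := by
  obtain ⟨⟨hij, hik, hjk, haik, hajk, hnaij⟩, e1, e2⟩ := hc
  have vconf₂ : G₂.VConfig i k j :=
    ⟨hij, hik, hjk, adj_transfer h haik, adj_transfer h hajk,
      fun hadj => hnaij (adj_transfer (markovEquiv_symm h) hadj)⟩
  have hkC : k ∉ G₁.ancestors {i, j} := by
    rintro ⟨-, m, hm, hkm⟩
    rcases hm with hm | hm
    · subst hm; exact G₁.acyclic _ (hkm.tail e1)
    · rw [Set.mem_singleton_iff] at hm; subst hm; exact G₁.acyclic _ (hkm.tail e2)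
  have hd1 : G₁.dSep {i} {j} (G₁.ancestors {i, j}) := G₁.dSep_ancestors hnaij
  have hd2 : G₂.dSep {i} {j} (G₁.ancestors {i, j}) := by
    refine (h {i} {j} _ ?_ ?_ ?_).mp hd1
    · exact Set.disjoint_singleton.mpr hij
    · exact Set.disjoint_singleton_left.mpr (G₁.not_mem_ancestors_self (by simp))
    · exact Set.disjoint_singleton_left.mpr (G₁.not_mem_ancestors_self (by simp))
  let π : Path G₂ i j :=
    { n := 2
      npos := by omega
      f := ![i, k, j]
      first := rfl
      last := rfl
      adj := fun t => by
        fin_cases t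
        · exact adj_transfer h haik
        · exact (adj_transfer h hajk).symm'
      inj := by
        intro x y hxy
        fin_cases x <;> fin_cases y <;> simp_all }
  obtain ⟨t, h1, h2, hb⟩ := hd2 i rfl j rfl π
  have h2' : t < 2 := h2
  have ht : t = 1 := by omega
  subst ht
  have hf1 : π.f ⟨1, by omega⟩ = k := rfl
  rcases hb with ⟨-, hmem⟩ | ⟨⟨ha1, ha2⟩, -⟩
  · rw [hf1] at hmem
    exact absurd hmem hkC
  · exact ⟨vconf₂, ha1, ha2⟩

lemma noncollider_transfer {G₁ G₂ : DAG V} (h : MarkovEquiv G₁ G₂) {i k j : V}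
    (hc : G₁.IsNonCollider i k j) : G₂.IsNonCollider i k j := by
  obtain ⟨⟨hij, hik, hjk, haik, hajk, hnaij⟩, hno⟩ := hc
  refine ⟨⟨hij, hik, hjk, adj_transfer h haik, adj_transfer h hajk,
      fun hadj => hnaij (adj_transfer (markovEquiv_symm h) hadj)⟩, ?_⟩
  rintro ⟨e1, e2⟩
  have hcol₂ : G₂.IsCollider i k j :=
    ⟨⟨hij, hik, hjk, adj_transfer h haik, adj_transfer h hajk,
      fun hadj => hnaij (adj_transfer (markovEquiv_symm h) hadj)⟩, e1, e2⟩
  exact hno (collider_transfer (markovEquiv_symm h) hcol₂).2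

end Aux

end DAG

variable {V : Type*} [Fintype V] {Ω : Type*} [MeasurableSpace Ω] [StandardBorelSpace Ω]
  [Nonempty Ω] {E : V → Type*} [∀ i, MeasurableSpace (E i)]
  (μ : MeasureTheory.Measure Ω) [MeasureTheory.IsProbabilityMeasure μ]
  (X : ∀ i, Ω → E i) (hX : ∀ i, Measurable (X i))

/-- If `G₁` and `G₂` are Markov equivalent DAGs and `P` is V-OUS and collider-stable wrt
`G₁`, then `P` is V-OUS and collider-stable wrt `G₂`. -/
theorem stmt_4 (G₁ G₂ : DAG V) (heq : DAG.MarkovEquiv G₁ G₂)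
    (h : VOUS μ X hX G₁ ∧ ColliderStable μ X hX G₁) :
    VOUS μ X hX G₂ ∧ ColliderStable μ X hX G₂ := by
  obtain ⟨hvous, hcs⟩ := h
  constructor
  · intro i k j hnc C hC hCI
    exact hvous i k j (DAG.noncollider_transfer (DAG.markovEquiv_symm heq) hnc) C hC hCI
  · intro i k j hcol
    exact hcs i k j (DAG.collider_transfer (DAG.markovEquiv_symm heq) hcol)
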